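/- arXiv:1307.5803 — 4 statements merged into one kernel-verified Lean document; each statement's English description precedes it below -/
import Mathlib

section
/- Let μ and μ_n (n ≥ 1) be elements of M_O. Then ∫ f dμ_n → ∫ f dμ for every f ∈ C_O if and only if ∫ f dμ_n → ∫ f dμ for every f ∈ C_O whose extension by 0 to all of S is uniformly continuous on S. -/
/-!
A function `f ∈ C_O` is squeezed between its Lipschitz envelopes
`⨅ y, f y + k * dist x y ≤ f x ≤ ⨆ y, f y - k * dist x y`. For large `k` both envelopes lie in
`C_O` again, they are `k`-Lipschitz, hence uniformly continuous, and they converge pointwise to `f`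
as `k → ∞` since `f` is continuous and bounded. Dominated convergence under `μ` together with the
assumed convergence for each fixed envelope then squeezes `∫ f dμ_n` towards `∫ f dμ`.
-/

open MeasureTheory Metric Filter Topology Set

noncomputable section

variable {S : Type*} [MetricSpace S] [MeasurableSpace S]

/-- `A` is bounded away from `C`: `A ⊆ S \ C^r` for some `r > 0`. -/
def BddAway (C A : Set S) : Prop := ∃ r > 0, ∀ x ∈ A, r ≤ infDist x C

/-- The class `C_O` of test functions: bounded, nonnegative, continuous on `O = S \ C`,
and vanishing on `C^r` for some `r > 0` (extended by `0` to all of `S`). -/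
def IsCO (C : Set S) (f : S → ℝ) : Prop :=
  ContinuousOn f Cᶜ ∧ (∀ x, 0 ≤ f x) ∧ (∃ B : ℝ, ∀ x, f x ≤ B) ∧
    ∃ r > 0, ∀ x, infDist x C < r → f x = 0

/-- The class `M_O`: Borel measures on `O = S \ C` (i.e. giving no mass to `C`)
that are finite on `S \ C^r` for each `r > 0`. -/
def MemMO (C : Set S) (μ : Measure S) : Prop :=
  μ C = 0 ∧ ∀ r : ℝ, 0 < r → μ {x | r ≤ infDist x C} < ⊤

/-- Convergence `μ_n → μ` in `M_O`. -/
def MOTendsto (C : Set S) (μn : ℕ → Measure S) (μ : Measure S) : Prop :=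
  ∀ f : S → ℝ, IsCO C f →
    Tendsto (fun n => ∫ x, f x ∂ μn n) atTop (𝓝 (∫ x, f x ∂ μ))

section LipschitzEnvelope

variable {X : Type*} [PseudoMetricSpace X] {f : X → ℝ} {k : ℕ} {x : X} {B c ρ : ℝ}

/-- The least `k`-Lipschitz majorant of `f` (when `f` is bounded above). -/
def lipschitzUpper (f : X → ℝ) (k : ℕ) (x : X) : ℝ := ⨆ y, f y - k * dist x y

def lipschitzLower (f : X → ℝ) (k : ℕ) : X → ℝ := -lipschitzUpper (-f) k

lemma bddAbove_range_sub_mul_dist (hf : BddAbove (range f)) (k : ℕ) (x : X) :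
    BddAbove (range fun y => f y - k * dist x y) := by
  obtain ⟨B, hB⟩ := hf
  refine ⟨B, forall_mem_range.2 fun y => ?_⟩
  have : 0 ≤ (k : ℝ) * dist x y := by positivity
  linarith [hB (mem_range_self y)]

lemma sub_mul_dist_le_lipschitzUpper (hf : BddAbove (range f)) (k : ℕ) (x y : X) :
    f y - k * dist x y ≤ lipschitzUpper f k x :=
  le_ciSup (bddAbove_range_sub_mul_dist hf k x) y

lemma le_lipschitzUpper (hf : BddAbove (range f)) (k : ℕ) (x : X) :
    f x ≤ lipschitzUpper f k x := by
  simpa using sub_mul_dist_le_lipschitzUpper hf k x x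

lemma lipschitzUpper_le_of_forall (h : ∀ y, f y - k * dist x y ≤ c) :
    lipschitzUpper f k x ≤ c :=
  have : Nonempty X := ⟨x⟩
  ciSup_le h

lemma lipschitzUpper_le (h : ∀ y, f y ≤ c) : lipschitzUpper f k x ≤ c :=
  lipschitzUpper_le_of_forall fun y => (sub_le_self _ (by positivity)).trans (h y)

lemma lipschitzUpper_le_of_ball (hB : ∀ y, f y ≤ B) (hρ : ∀ y, dist y x < ρ → f y ≤ c)
    (hk : B - c ≤ k * ρ) : lipschitzUpper f k x ≤ c :=
  lipschitzUpper_le_of_forall fun y => by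
    rw [dist_comm]
    rcases lt_or_ge (dist y x) ρ with hy | hy
    · have : 0 ≤ (k : ℝ) * dist y x := by positivity
      linarith [hρ y hy]
    · have := mul_le_mul_of_nonneg_left hy k.cast_nonneg
      linarith [hB y]

lemma lipschitzWith_lipschitzUpper (hf : BddAbove (range f)) (k : ℕ) :
    LipschitzWith k (lipschitzUpper f k) := by
  refine LipschitzWith.of_le_add_mul _ fun x x' => lipschitzUpper_le_of_forall fun y => ?_
  have hy := sub_mul_dist_le_lipschitzUpper hf k x' y
  have htri := mul_le_mul_of_nonneg_left (dist_triangle x' x y) k.cast_nonneg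
  rw [dist_comm x' x] at htri
  push_cast
  linarith

lemma antitone_lipschitzUpper (hf : BddAbove (range f)) : Antitone (lipschitzUpper f) :=
  fun k k' hkk' x => lipschitzUpper_le_of_forall fun y =>
    (sub_mul_dist_le_lipschitzUpper hf k x y).trans' <| by gcongr

lemma tendsto_lipschitzUpper (hf : BddAbove (range f)) (hx : ContinuousAt f x) :
    Tendsto (fun k : ℕ => lipschitzUpper f k x) atTop (𝓝 (f x)) := by
  refine tendsto_order.2
    ⟨fun a ha => .of_forall fun k => ha.trans_le (le_lipschitzUpper hf k x), fun a ha => ?_⟩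
  obtain ⟨B, hB⟩ := hf
  obtain ⟨c, hxc, hca⟩ := exists_between ha
  obtain ⟨ρ, hρ, hball⟩ := Metric.eventually_nhds_iff.1 (hx.eventually (gt_mem_nhds hxc))
  filter_upwards [(tendsto_natCast_atTop_atTop.atTop_mul_const hρ).eventually_ge_atTop (B - c)]
    with k hk
  exact (lipschitzUpper_le_of_ball (fun y => hB (mem_range_self y)) (fun y hy => (hball hy).le)
    hk).trans_lt hca

lemma lipschitzLower_le (hf : BddBelow (range f)) (k : ℕ) (x : X) : lipschitzLower f k x ≤ f x :=
  neg_le.1 (le_lipschitzUpper hf.range_neg k x)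

lemma le_lipschitzLower (h : ∀ y, c ≤ f y) : c ≤ lipschitzLower f k x :=
  le_neg.2 (lipschitzUpper_le fun y => neg_le_neg (h y))

lemma lipschitzWith_lipschitzLower (hf : BddBelow (range f)) (k : ℕ) :
    LipschitzWith k (lipschitzLower f k) :=
  (lipschitzWith_lipschitzUpper hf.range_neg k).neg

lemma tendsto_lipschitzLower (hf : BddBelow (range f)) (hx : ContinuousAt f x) :
    Tendsto (fun k : ℕ => lipschitzLower f k x) atTop (𝓝 (f x)) := by
  simpa only [lipschitzLower, Pi.neg_apply, neg_neg] using
    (tendsto_lipschitzUpper (f := -f) hf.range_neg hx.neg).neg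

end LipschitzEnvelope

theorem tendsto_of_iterated_squeeze {α ι κ : Type*} [TopologicalSpace α] [LinearOrder α]
    [OrderTopology α] {l : Filter κ} [l.NeBot] {F : Filter ι} {u : ι → α} {a b : κ → ι → α}
    {A B : κ → α} {L : α} (ha : ∀ᶠ k in l, Tendsto (a k) F (𝓝 (A k)))
    (hb : ∀ᶠ k in l, Tendsto (b k) F (𝓝 (B k))) (hA : Tendsto A l (𝓝 L))
    (hB : Tendsto B l (𝓝 L)) (hau : ∀ᶠ k in l, ∀ i, a k i ≤ u i)
    (hub : ∀ᶠ k in l, ∀ i, u i ≤ b k i) : Tendsto u F (𝓝 L) := by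
  refine tendsto_order.2 ⟨fun c hc => ?_, fun c hc => ?_⟩
  · obtain ⟨k, hAk, hak, hau⟩ := ((hA.eventually (lt_mem_nhds hc)).and (ha.and hau)).exists
    exact (hak.eventually (lt_mem_nhds hAk)).mono fun i hi => hi.trans_le (hau i)
  · obtain ⟨k, hBk, hbk, hub⟩ := ((hB.eventually (gt_mem_nhds hc)).and (hb.and hub)).exists
    exact (hbk.eventually (gt_mem_nhds hBk)).mono fun i hi => (hub i).trans_lt hi

lemma tendsto_integral_of_nonneg_of_le {X : Type*} [MeasurableSpace X] {μ : Measure X}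
    {g : ℕ → X → ℝ} {f h : X → ℝ} (hh : Integrable h μ)
    (hg : ∀ k, AEStronglyMeasurable (g k) μ) (hg0 : ∀ k x, 0 ≤ g k x)
    (hgh : ∀ᶠ k in atTop, ∀ x, g k x ≤ h x) (hlim : ∀ x, Tendsto (g · x) atTop (𝓝 (f x))) :
    Tendsto (fun k => ∫ x, g k x ∂μ) atTop (𝓝 (∫ x, f x ∂μ)) :=
  tendsto_integral_filter_of_dominated_convergence h (.of_forall hg)
    (hgh.mono fun k hk => ae_of_all _ fun x => (Real.norm_of_nonneg (hg0 k x)).trans_le (hk x))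
    hh (ae_of_all _ hlim)

namespace IsCO

variable {X : Type*} [MetricSpace X] {C : Set X} {f g : X → ℝ}

lemma nonneg (hf : IsCO C f) (x : X) : 0 ≤ f x := hf.2.1 x

lemma bddAbove_range (hf : IsCO C f) : BddAbove (range f) :=
  let ⟨B, hB⟩ := hf.2.2.1
  ⟨B, forall_mem_range.2 hB⟩

lemma bddBelow_range (hf : IsCO C f) : BddBelow (range f) := ⟨0, forall_mem_range.2 hf.nonneg⟩

lemma continuous (hC : IsClosed C) (hf : IsCO C f) : Continuous f := by
  obtain ⟨hcont, -, -, r, hr, hvan⟩ := hf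
  refine continuous_iff_continuousAt.2 fun x => ?_
  by_cases hx : x ∈ C
  · have hnear : ∀ᶠ y in 𝓝 x, infDist y C < r :=
      (continuous_infDist_pt C).continuousAt.eventually_lt continuousAt_const
        (by rwa [infDist_zero_of_mem hx])
    exact continuousAt_const.congr (hnear.mono fun y hy => (hvan y hy).symm)
  · exact hcont.continuousAt (hC.isOpen_compl.mem_nhds hx)

lemma of_le (hg : IsCO C g) (hf : ContinuousOn f Cᶜ) (hf0 : ∀ x, 0 ≤ f x)
    (hfg : ∀ x, f x ≤ g x) : IsCO C f := by
  obtain ⟨-, -, ⟨B, hB⟩, r, hr, hvan⟩ := hg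
  exact ⟨hf, hf0, ⟨B, fun x => (hfg x).trans (hB x)⟩, r, hr,
    fun x hx => le_antisymm ((hfg x).trans (hvan x hx).le) (hf0 x)⟩

/-- The upper envelope vanishes on `C^(r/2)` once `k * (r / 2)` exceeds the bound of `f`. -/
lemma exists_isCO_lipschitzUpper (hf : IsCO C f) : ∃ K : ℕ, IsCO C (lipschitzUpper f K) := by
  have hbdd := hf.bddAbove_range
  have hle := le_lipschitzUpper hbdd
  obtain ⟨-, hpos, ⟨B, hB⟩, r, hr, hvan⟩ := hf
  obtain ⟨K, hK⟩ := exists_nat_ge (B / (r / 2))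
  refine ⟨K, (lipschitzWith_lipschitzUpper hbdd K).continuous.continuousOn,
    fun x => (hpos x).trans (hle K x), ⟨B, fun x => lipschitzUpper_le hB⟩, r / 2, half_pos hr,
    fun x hx => le_antisymm (lipschitzUpper_le_of_ball (ρ := r / 2) hB
      (fun y (hy : dist y x < r / 2) => (hvan y ?_).le) ?_)
      ((hpos x).trans (hle K x))⟩
  · linarith [infDist_le_infDist_add_dist (x := y) (y := x) (s := C)]
  · simpa using (div_le_iff₀ (half_pos hr)).1 hK

lemma integrable [MeasurableSpace X] [BorelSpace X] {μ : Measure X} (hC : IsClosed C)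
    (hf : IsCO C f) (hμ : MemMO C μ) : Integrable f μ := by
  obtain ⟨-, hpos, ⟨B, hB⟩, r, hr, hvan⟩ := id hf
  refine IntegrableOn.integrable_of_forall_notMem_eq_zero (s := {x | r ≤ infDist x C}) ?_
    fun x hx => hvan x (not_le.1 hx)
  refine Measure.integrableOn_of_bounded (M := B) (hμ.2 r hr).ne
    (hf.continuous hC).aestronglyMeasurable (ae_of_all _ fun x => ?_)
  rw [Real.norm_of_nonneg (hpos x)]
  exact hB x

end IsCO

theorem stmt0_general [BorelSpace S]
    (C : Set S) (hC : IsClosed C)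
    (μ : Measure S) (μn : ℕ → Measure S)
    (hμ : MemMO C μ) (hμn : ∀ n, MemMO C (μn n)) :
    (∀ f : S → ℝ, IsCO C f →
        Tendsto (fun n => ∫ x, f x ∂ μn n) atTop (𝓝 (∫ x, f x ∂ μ)))
    ↔
    (∀ f : S → ℝ, IsCO C f → UniformContinuous f →
        Tendsto (fun n => ∫ x, f x ∂ μn n) atTop (𝓝 (∫ x, f x ∂ μ))) := by
  refine ⟨fun H f hf _ => H f hf, fun H f hf => ?_⟩
  have hfc := hf.continuous hC
  have hbdd := hf.bddAbove_range
  have hbdd' := hf.bddBelow_range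
  have hlower (k : ℕ) : IsCO C (lipschitzLower f k) :=
    hf.of_le (lipschitzWith_lipschitzLower hbdd' k).continuous.continuousOn
      (fun _ => le_lipschitzLower hf.nonneg) (lipschitzLower_le hbdd' k)
  obtain ⟨K, hK⟩ := hf.exists_isCO_lipschitzUpper
  have hupper_le : ∀ᶠ k in atTop, lipschitzUpper f k ≤ lipschitzUpper f K :=
    eventually_atTop.2 ⟨K, fun _ hk => antitone_lipschitzUpper hbdd hk⟩
  have hupper : ∀ᶠ k in atTop, IsCO C (lipschitzUpper f k) :=
    hupper_le.mono fun k hk => hK.of_le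
      (lipschitzWith_lipschitzUpper hbdd k).continuous.continuousOn
      (fun x => (hf.nonneg x).trans (le_lipschitzUpper hbdd k x)) hk
  refine tendsto_of_iterated_squeeze
    (.of_forall fun k => H _ (hlower k) (lipschitzWith_lipschitzLower hbdd' k).uniformContinuous)
    (hupper.mono fun k hk => H _ hk (lipschitzWith_lipschitzUpper hbdd k).uniformContinuous)
    (tendsto_integral_of_nonneg_of_le (hf.integrable hC hμ)
      (fun k => ((hlower k).continuous hC).aestronglyMeasurable) (fun k => (hlower k).nonneg)
      (.of_forall (lipschitzLower_le hbdd')) fun _ => tendsto_lipschitzLower hbdd' hfc.continuousAt)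
    (tendsto_integral_of_nonneg_of_le (hK.integrable hC hμ)
      (fun k => (lipschitzWith_lipschitzUpper hbdd k).continuous.aestronglyMeasurable)
      (fun k x => (hf.nonneg x).trans (le_lipschitzUpper hbdd k x)) hupper_le
      fun _ => tendsto_lipschitzUpper hbdd hfc.continuousAt)
    (.of_forall fun k n => integral_mono ((hlower k).integrable hC (hμn n))
      (hf.integrable hC (hμn n)) (lipschitzLower_le hbdd' k))
    (hupper.mono fun k hk n => integral_mono (hf.integrable hC (hμn n)) (hk.integrable hC (hμn n))
      (le_lipschitzUpper hbdd k))

/-- Portmanteau (i) ⟺ (ii): convergence tested on all of `C_O` is equivalent to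
convergence tested on those `f ∈ C_O` whose extension by `0` to `S` is uniformly
continuous on `S`. -/
theorem stmt0 [BorelSpace S] [CompleteSpace S] [TopologicalSpace.SeparableSpace S]
    (C : Set S) (hC : IsClosed C)
    (μ : Measure S) (μn : ℕ → Measure S)
    (hμ : MemMO C μ) (hμn : ∀ n, MemMO C (μn n)) :
    (∀ f : S → ℝ, IsCO C f →
        Tendsto (fun n => ∫ x, f x ∂ μn n) atTop (𝓝 (∫ x, f x ∂ μ)))
    ↔
    (∀ f : S → ℝ, IsCO C f → UniformContinuous f →
        Tendsto (fun n => ∫ x, f x ∂ μn n) atTop (𝓝 (∫ x, f x ∂ μ))) :=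
  stmt0_general C hC μ μn hμ hμn
end
end

section
/- Let μ and μ_n (n ≥ 1) be elements of M_O, and for ρ ∈ M_O and r > 0 let ρ^{(r)} denote the restriction of ρ to S \ C^r, which is a finite Borel measure on the closed subspace S \ C^r. The following are equivalent: (a) μ_n → μ in M_O; (b) μ_n^{(r)} → μ^{(r)} weakly as finite Borel measures on S \ C^r for all but at most countably many r > 0; (c) there exists a sequence r_i ↓ 0 such that μ_n^{(r_i)} → μ^{(r_i)} weakly as finite Borel measures on S \ C^{r_i} for each i. -/
/-!
Write `d = infDist · C`. (a) ⇒ (b): since `μ` is finite on each `{d ≥ 1/k}`, only countably many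
levels `{d = r}` carry `μ`-mass. For any other `r`, multiply `g` by a continuous cutoff `χ`
vanishing off `S \ C^r`: then `g χ` is a difference of two functions of `C_O`, and the error
`∫_{S \ C^r} g - ∫ g χ` is bounded by the mass of a thin band around `{d = r}`. That mass is
measured by a bump in `C_O`, is small for `μ` because the level is `μ`-null, and hence is
eventually small for `μ_n`. (b) ⇒ (c) because a countable set has dense complement, and
(c) ⇒ (a) because a function of `C_O` is supported in `S \ C^{r_i}` once `r_i` is small.
-/

open MeasureTheory Metric Filter Topology Set

noncomputable section

variable {S : Type*} [MetricSpace S] [MeasurableSpace S]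

/-- Weak convergence of the restrictions of `μ_n` and `μ` to the set `A`
(viewed as finite Borel measures on the subspace `A`): `∫ g dν_n → ∫ g dν` for
every real-valued `g` that is bounded and continuous on `A`. -/
def WeakConvOn (A : Set S) (μn : ℕ → Measure S) (μ : Measure S) : Prop :=
  ∀ g : S → ℝ, ContinuousOn g A → (∃ B : ℝ, ∀ x ∈ A, |g x| ≤ B) →
    Tendsto (fun n => ∫ x in A, g x ∂ μn n) atTop (𝓝 (∫ x in A, g x ∂ μ))


lemma tendsto_of_forall_approx {ι : Type*} {l : Filter ι} {a : ι → ℝ} {a₀ : ℝ}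
    (h : ∀ ε > 0, ∃ b : ι → ℝ, ∃ b₀, Tendsto b l (𝓝 b₀) ∧
      (∀ᶠ i in l, |a i - b i| ≤ ε) ∧ |a₀ - b₀| ≤ ε) :
    Tendsto a l (𝓝 a₀) := by
  refine Metric.tendsto_nhds.2 fun ε hε => ?_
  obtain ⟨b, b₀, hb, hab, hab₀⟩ := h (ε / 4) (by positivity)
  filter_upwards [hab, Metric.tendsto_nhds.1 hb (ε / 4) (by positivity)] with i hi hbi
  rw [Real.dist_eq] at hbi ⊢
  have h₁ := abs_sub_le (a i) (b i) a₀
  have h₂ := abs_sub_le (b i) b₀ a₀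
  rw [abs_sub_comm b₀] at h₂
  linarith

lemma abs_mul_le_mul_abs_of_forall_notMem {X : Type*} {A : Set X} {g χ : X → ℝ} {B : ℝ}
    (hgB : ∀ x ∈ A, |g x| ≤ B) (hχA : ∀ x ∉ A, χ x = 0) (x : X) : |g x * χ x| ≤ B * |χ x| := by
  rw [abs_mul]
  by_cases hx : x ∈ A
  · exact mul_le_mul_of_nonneg_right (hgB x hx) (abs_nonneg _)
  · simp [hχA x hx]

lemma ContinuousOn.continuous_mul_of_forall_notMem {X : Type*} [TopologicalSpace X] {A : Set X}
    {g χ : X → ℝ} {B : ℝ} (hg : ContinuousOn g A) (hgB : ∀ x ∈ A, |g x| ≤ B)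
    (hχ : Continuous χ) (hχA : ∀ x ∉ A, χ x = 0) :
    Continuous fun x => g x * χ x := by
  refine continuous_iff_continuousAt.2 fun x => ?_
  by_cases hx : x ∈ interior A
  · exact (hg.continuousAt (mem_interior_iff_mem_nhds.1 hx)).mul hχ.continuousAt
  have hχx : χ x = 0 :=
    closure_minimal (fun y hy => hχA y hy) (isClosed_eq hχ continuous_const)
      (closure_compl (s := A) ▸ hx)
  have hlim : Tendsto (fun y => B * |χ y|) (𝓝 x) (𝓝 0) := by
    simpa [hχx] using (hχ.abs.tendsto x).const_mul B
  simpa [ContinuousAt, hχx] using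
    squeeze_zero_norm (fun y => abs_mul_le_mul_abs_of_forall_notMem hgB hχA y) hlim

lemma exists_measure_preimage_closedBall_lt {α : Type*} [MeasurableSpace α] {μ : Measure α}
    {f : α → ℝ} (hf : Measurable f) {r R : ℝ} (hR : 0 < R)
    (hfin : μ (f ⁻¹' closedBall r R) ≠ ⊤) (h₀ : μ (f ⁻¹' {r}) = 0)
    {ε : ENNReal} (hε : 0 < ε) : ∃ t ∈ Ioo 0 R, μ (f ⁻¹' closedBall r t) < ε := by
  have hlim := tendsto_measure_cthickening_of_isClosed (μ := μ.map f) (s := {r})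
    ⟨R, hR, by rwa [cthickening_singleton _ hR.le, Measure.map_apply hf measurableSet_closedBall]⟩
    isClosed_singleton
  rw [Measure.map_apply hf (measurableSet_singleton r), h₀] at hlim
  have hev : ∀ᶠ t in 𝓝[>] 0, t ∈ Ioo 0 R ∧ (μ.map f) (cthickening t {r}) < ε :=
    Filter.Eventually.and (Ioo_mem_nhdsGT hR)
      ((hlim.eventually (gt_mem_nhds hε)).filter_mono nhdsWithin_le_nhds)
  obtain ⟨t, ht, htε⟩ := hev.exists
  refine ⟨t, ht, ?_⟩
  rwa [cthickening_singleton _ ht.1.le, Measure.map_apply hf measurableSet_closedBall] at htε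

lemma countable_setOf_measure_level_ne_zero {α : Type*} [MeasurableSpace α] {μ : Measure α}
    {f : α → ℝ} (hf : Measurable f) (hfin : ∀ a > 0, μ {x | a ≤ f x} ≠ ⊤) :
    {t : ℝ | 0 < t ∧ μ {x | f x = t} ≠ 0}.Countable := by
  have hsub : {t : ℝ | 0 < t ∧ μ {x | f x = t} ≠ 0} ⊆
      ⋃ k : ℕ, {t | 0 < μ.restrict {x | 1 / ((k : ℝ) + 1) ≤ f x} {x | f x = t}} := by
    rintro t ⟨ht, hμt⟩
    obtain ⟨k, hk⟩ := exists_nat_one_div_lt ht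
    refine mem_iUnion.2 ⟨k, ?_⟩
    have hlevel : MeasurableSet {x | f x = t} := hf (measurableSet_singleton t)
    have hsub : {x | f x = t} ⊆ {x | 1 / ((k : ℝ) + 1) ≤ f x} := fun x (hx : f x = t) =>
      show _ ≤ f x from hx ▸ hk.le
    rw [mem_ofPred_eq, Measure.restrict_apply hlevel, inter_eq_self_of_subset_left hsub]
    exact pos_iff_ne_zero.2 hμt
  refine (countable_iUnion fun k => ?_).mono hsub
  have : IsFiniteMeasure (μ.restrict {x | 1 / ((k : ℝ) + 1) ≤ f x}) :=
    ⟨by rw [Measure.restrict_apply_univ]; exact (hfin _ (by positivity)).lt_top⟩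
  exact Measure.countable_meas_level_set_pos hf

lemma Set.Countable.exists_seq_strictAnti_tendsto_zero_notMem {T : Set ℝ} (hT : T.Countable) :
    ∃ r : ℕ → ℝ, StrictAnti r ∧ (∀ i, 0 < r i) ∧ Tendsto r atTop (𝓝 0) ∧ ∀ i, r i ∉ T :=
  let ⟨r, hanti, hmem, hlim⟩ := (hT.dense_compl ℝ).exists_seq_strictAnti_tendsto 0
  ⟨r, hanti, fun i => (hmem i).1, hlim, fun i => (hmem i).2⟩

lemma integrableOn_of_forall_abs_le {α : Type*} [MeasurableSpace α] {ν : Measure α} {A : Set α}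
    (hA : MeasurableSet A) (hνA : ν A ≠ ⊤) {g : α → ℝ} (hg : AEStronglyMeasurable g (ν.restrict A))
    {B : ℝ} (hgB : ∀ x ∈ A, |g x| ≤ B) : IntegrableOn g A ν :=
  ⟨hg, HasFiniteIntegral.restrict_of_bounded B hνA.lt_top
    (ae_restrict_of_forall_mem hA fun x hx => (Real.norm_eq_abs _).trans_le (hgB x hx))⟩

lemma abs_setIntegral_sub_integral_mul_le {α : Type*} [MeasurableSpace α] {ν : Measure α}
    {A : Set α} (hA : MeasurableSet A) (hνA : ν A ≠ ⊤) {g χ ψ : α → ℝ} {B : ℝ} (hB : 0 ≤ B)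
    (hg : AEStronglyMeasurable g (ν.restrict A)) (hgB : ∀ x ∈ A, |g x| ≤ B)
    (hχ : Measurable χ) (hχ01 : ∀ x, χ x ∈ Icc 0 1) (hχA : ∀ x ∉ A, χ x = 0)
    (hψ : Integrable ψ ν) (hψ0 : ∀ x, 0 ≤ ψ x) (hψχ : ∀ x ∈ A, 1 - χ x ≤ ψ x) :
    |∫ x in A, g x ∂ν - ∫ x, g x * χ x ∂ν| ≤ B * ∫ x, ψ x ∂ν := by
  have hgA : IntegrableOn g A ν := integrableOn_of_forall_abs_le hA hνA hg hgB
  have hgχA : IntegrableOn (fun x => g x * χ x) A ν :=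
    hgA.mul_bdd hχ.aestronglyMeasurable (c := 1) (Eventually.of_forall fun x => by
      rw [Real.norm_eq_abs, abs_of_nonneg (hχ01 x).1]; exact (hχ01 x).2)
  have hpointwise : ∀ x ∈ A, ‖g x - g x * χ x‖ ≤ B * ψ x := fun x hx => by
    have h1χ : 0 ≤ 1 - χ x := sub_nonneg.2 (hχ01 x).2
    rw [Real.norm_eq_abs, ← mul_one_sub, abs_mul, abs_of_nonneg h1χ]
    exact mul_le_mul (hgB x hx) (hψχ x hx) h1χ hB
  rw [← setIntegral_eq_integral_of_forall_compl_eq_zero (s := A) (μ := ν)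
      (f := fun x => g x * χ x) fun x hx => by simp [hχA x hx],
    ← integral_sub hgA hgχA]
  calc |∫ x in A, g x - g x * χ x ∂ν| ≤ ∫ x in A, B * ψ x ∂ν :=
        norm_integral_le_of_norm_le (hψ.integrableOn.const_mul B)
          (ae_restrict_of_forall_mem hA hpointwise)
    _ = B * ∫ x in A, ψ x ∂ν := integral_const_mul B _
    _ ≤ B * ∫ x, ψ x ∂ν :=
        mul_le_mul_of_nonneg_left (setIntegral_le_integral hψ (Eventually.of_forall hψ0)) hB

lemma setOf_le_infDist_subset_compl {X : Type*} [PseudoMetricSpace X] {C : Set X} {r : ℝ}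
    (hr : 0 < r) : {x : X | r ≤ infDist x C} ⊆ Cᶜ :=
  fun x hx hxC => by
    rw [mem_ofPred_eq, infDist_zero_of_mem hxC] at hx
    linarith

lemma isCO_max_zero {X : Type*} [MetricSpace X] {C : Set X} {f : X → ℝ} (hf : Continuous f)
    {B : ℝ} (hB : ∀ x, |f x| ≤ B) {r : ℝ}
    (hr : 0 < r) (h₀ : ∀ x, infDist x C < r → f x = 0) : IsCO C fun x => max (f x) 0 :=
  ⟨(hf.max continuous_const).continuousOn, fun x => le_max_right _ _,
    ⟨B, fun x => max_le ((le_abs_self _).trans (hB x)) ((abs_nonneg _).trans (hB x))⟩,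
    r, hr, fun x hx => by simp [h₀ x hx]⟩

section MO

variable {C : Set S}

lemma moTendsto_of_weakConvOn {μ : Measure S} {μn : ℕ → Measure S}
    (h : ∀ ρ > 0, ∃ r ∈ Ioo 0 ρ, WeakConvOn {x | r ≤ infDist x C} μn μ) :
    MOTendsto C μn μ := by
  rintro f ⟨hcont, hnn, ⟨B, hB⟩, ρ, hρ, h₀⟩
  obtain ⟨r, ⟨hr, hrρ⟩, hw⟩ := h ρ hρ
  have hint : ∀ ν : Measure S, ∫ x in {x | r ≤ infDist x C}, f x ∂ν = ∫ x, f x ∂ν := fun ν =>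
    setIntegral_eq_integral_of_forall_compl_eq_zero fun x hx => h₀ x ((not_le.1 hx).trans hrρ)
  simpa only [hint] using hw f (hcont.mono (setOf_le_infDist_subset_compl hr))
    ⟨B, fun x _ => (abs_of_nonneg (hnn x)).trans_le (hB x)⟩

variable [BorelSpace S]

lemma IsCO.integrable_s3 {f : S → ℝ} (hf : IsCO C f) {ν : Measure S} (hν : MemMO C ν) :
    Integrable f ν := by
  obtain ⟨hcont, hnn, ⟨B, hB⟩, r, hr, h₀⟩ := hf
  have hA : MeasurableSet {x : S | r ≤ infDist x C} :=
    measurableSet_le measurable_const (continuous_infDist_pt C).measurable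
  refine IntegrableOn.integrable_of_forall_notMem_eq_zero ?_ fun x hx => h₀ x (not_le.1 hx)
  exact integrableOn_of_forall_abs_le hA (hν.2 r hr).ne
    ((hcont.mono (setOf_le_infDist_subset_compl hr)).aestronglyMeasurable hA)
    fun x _ => (abs_of_nonneg (hnn x)).trans_le (hB x)

lemma MOTendsto.tendsto_integral {μ : Measure S} {μn : ℕ → Measure S} (h : MOTendsto C μn μ)
    (hμ : MemMO C μ) (hμn : ∀ n, MemMO C (μn n)) {f : S → ℝ} (hf : Continuous f) {B : ℝ}
    (hB : ∀ x, |f x| ≤ B) {r : ℝ} (hr : 0 < r) (h₀ : ∀ x, infDist x C < r → f x = 0) :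
    Tendsto (fun n => ∫ x, f x ∂μn n) atTop (𝓝 (∫ x, f x ∂μ)) := by
  have hpos := isCO_max_zero hf hB hr h₀
  have hneg := isCO_max_zero (C := C) (f := fun x => -f x) hf.neg (B := B)
    (fun x => by simpa only [abs_neg] using hB x) hr fun x hx => by simp [h₀ x hx]
  have hsplit : ∀ ν : Measure S, MemMO C ν →
      ∫ x, f x ∂ν = ∫ x, max (f x) 0 ∂ν - ∫ x, max (-f x) 0 ∂ν := fun ν hν => by
    simp only [← integral_sub (hpos.integrable_s3 hν) (hneg.integrable_s3 hν),
      max_zero_sub_max_neg_zero_eq_self]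
  simpa only [hsplit _ hμ, hsplit _ (hμn _)] using (h _ hpos).sub (h _ hneg)

lemma exists_isCO_eq_one_near_level {μ : Measure S} (hμ : MemMO C μ) {r : ℝ} (hr : 0 < r)
    (hr₀ : μ {x | infDist x C = r} = 0) {η : ℝ} (hη : 0 < η) :
    ∃ t > 0, ∃ ψ : S → ℝ, IsCO C ψ ∧ (∀ x, ψ x ∈ Icc 0 1) ∧
      (∀ x, dist (infDist x C) r ≤ t → ψ x = 1) ∧ ∫ x, ψ x ∂μ < η := by
  have hd : Continuous fun x => infDist x C := continuous_infDist_pt C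
  have hfin : μ ((fun x => infDist x C) ⁻¹' closedBall r (r / 2)) ≠ ⊤ := by
    refine ne_top_of_le_ne_top (hμ.2 (r / 2) (half_pos hr)).ne (measure_mono fun x hx => ?_)
    rw [mem_preimage, mem_closedBall, Real.dist_eq, abs_le] at hx
    exact show r / 2 ≤ infDist x C by linarith
  obtain ⟨t, ⟨ht, htr⟩, hμt⟩ := exists_measure_preimage_closedBall_lt hd.measurable
    (half_pos hr) hfin hr₀ (ENNReal.ofReal_pos.2 hη)
  obtain ⟨ψ, hψ₀, hψ₁, hψ01⟩ := exists_continuous_zero_one_of_isClosed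
    (isClosed_le continuous_const (hd.dist continuous_const))
    (isClosed_le (hd.dist continuous_const) continuous_const)
    (s := {x | t ≤ dist (infDist x C) r}) (t := {x | dist (infDist x C) r ≤ t / 2})
    (disjoint_left.2 fun x (h₁ : t ≤ dist (infDist x C) r)
      (h₂ : dist (infDist x C) r ≤ t / 2) => by linarith)
  refine ⟨t / 2, half_pos ht, ψ, ⟨ψ.continuous.continuousOn, fun x => (hψ01 x).1,
    ⟨1, fun x => (hψ01 x).2⟩, r - t, by linarith, fun x hx => hψ₀ (show t ≤ _ by
      rw [Real.dist_eq, abs_of_neg (by linarith)]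
      linarith)⟩, hψ01, fun x hx => hψ₁ hx, ?_⟩
  set band := (fun x => infDist x C) ⁻¹' closedBall r t
  have hψband : ∀ x ∉ band, ψ x = 0 := fun x hx =>
    hψ₀ (show t ≤ _ from (not_le.1 (by simpa [band] using hx)).le)
  rw [← setIntegral_eq_integral_of_forall_compl_eq_zero hψband]
  calc ∫ x in band, ψ x ∂μ ≤ 1 * μ.real band :=
        (le_abs_self _).trans (norm_setIntegral_le_of_norm_le_const
          (hμt.trans ENNReal.ofReal_lt_top) fun x _ => by
            rw [Real.norm_eq_abs, abs_of_nonneg (hψ01 x).1]; exact (hψ01 x).2)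
    _ < η := by rw [one_mul]; exact ENNReal.toReal_lt_of_lt_ofReal hμt

lemma weakConvOn_of_moTendsto {μ : Measure S} {μn : ℕ → Measure S} (hμ : MemMO C μ)
    (hμn : ∀ n, MemMO C (μn n)) (h : MOTendsto C μn μ) {r : ℝ} (hr : 0 < r)
    (hr₀ : μ {x | infDist x C = r} = 0) :
    WeakConvOn {x | r ≤ infDist x C} μn μ := by
  rintro g hg ⟨B₀, hB₀⟩
  set A := {x | r ≤ infDist x C}
  have hd : Continuous fun x => infDist x C := continuous_infDist_pt C
  have hA : MeasurableSet A := measurableSet_le measurable_const hd.measurable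
  obtain ⟨B, hB, hgB⟩ : ∃ B, 0 ≤ B ∧ ∀ x ∈ A, |g x| ≤ B :=
    ⟨max B₀ 0, le_max_right _ _, fun x hx => (hB₀ x hx).trans (le_max_left _ _)⟩
  refine tendsto_of_forall_approx fun ε hε => ?_
  have hB₁ : 0 < B + 1 := by linarith
  obtain ⟨t, ht, ψ, hψCO, hψ01, hψ₁, hψμ⟩ :=
    exists_isCO_eq_one_near_level hμ hr hr₀ (div_pos hε hB₁)
  have hBψ : ∀ s < ε / (B + 1), B * s ≤ ε := fun s hs => by
    have := mul_div_cancel₀ ε hB₁.ne'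
    nlinarith [div_pos hε hB₁]
  obtain ⟨χ, hχ₀, hχ₁, hχ01⟩ := exists_continuous_zero_one_of_isClosed
    (isClosed_le hd continuous_const) (isClosed_le continuous_const hd)
    (s := {x | infDist x C ≤ r}) (t := {x | r + t ≤ infDist x C})
    (disjoint_left.2 fun x (h₁ : infDist x C ≤ r) (h₂ : r + t ≤ infDist x C) => by linarith)
  have hχA : ∀ x ∉ A, χ x = 0 := fun x hx => hχ₀ (show infDist x C ≤ r from (not_le.1 hx).le)
  have hψχ : ∀ x ∈ A, 1 - χ x ≤ ψ x := fun x (hx : r ≤ infDist x C) => by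
    by_cases hxt : r + t ≤ infDist x C
    · simpa [hχ₁ hxt] using (hψ01 x).1
    · rw [hψ₁ x (by rw [Real.dist_eq, abs_of_nonneg (by linarith)]; linarith)]
      linarith [(hχ01 x).1]
  have hest : ∀ ν, MemMO C ν →
      |∫ x in A, g x ∂ν - ∫ x, g x * χ x ∂ν| ≤ B * ∫ x, ψ x ∂ν := fun ν hν =>
    abs_setIntegral_sub_integral_mul_le hA (hν.2 r hr).ne hB (hg.aestronglyMeasurable hA) hgB
      χ.continuous.measurable hχ01 hχA (hψCO.integrable_s3 hν) (fun x => (hψ01 x).1) hψχ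
  have hgχ : Tendsto (fun n => ∫ x, g x * χ x ∂μn n) atTop (𝓝 (∫ x, g x * χ x ∂μ)) := by
    refine h.tendsto_integral hμ hμn (hg.continuous_mul_of_forall_notMem hgB χ.continuous hχA)
      (B := B) (fun x => ?_) hr fun x hx => by simp [hχA x (not_le.2 hx)]
    exact (abs_mul_le_mul_abs_of_forall_notMem hgB hχA x).trans
      (mul_le_of_le_one_right hB ((abs_of_nonneg (hχ01 x).1).trans_le (hχ01 x).2))
  refine ⟨_, _, hgχ, ?_, (hest μ hμ).trans (hBψ _ hψμ)⟩
  filter_upwards [(h ψ hψCO).eventually_lt_const hψμ] with n hn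
  exact (hest _ (hμn n)).trans (hBψ _ hn)

end MO

theorem stmt3_general [BorelSpace S]
    (C : Set S)
    (μ : Measure S) (μn : ℕ → Measure S)
    (hμ : MemMO C μ) (hμn : ∀ n, MemMO C (μn n)) :
    (MOTendsto C μn μ ↔
      ∃ T : Set ℝ, T.Countable ∧ ∀ r : ℝ, 0 < r → r ∉ T →
        WeakConvOn {x | r ≤ infDist x C} μn μ) ∧
    ((∃ T : Set ℝ, T.Countable ∧ ∀ r : ℝ, 0 < r → r ∉ T →
        WeakConvOn {x | r ≤ infDist x C} μn μ) ↔
      ∃ r : ℕ → ℝ, StrictAnti r ∧ (∀ i, 0 < r i) ∧ Tendsto r atTop (𝓝 0) ∧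
        ∀ i, WeakConvOn {x | r i ≤ infDist x C} μn μ) := by
  have hab : MOTendsto C μn μ → ∃ T : Set ℝ, T.Countable ∧ ∀ r : ℝ, 0 < r → r ∉ T →
      WeakConvOn {x | r ≤ infDist x C} μn μ := fun h =>
    ⟨_, countable_setOf_measure_level_ne_zero (continuous_infDist_pt C).measurable
      fun a ha => (hμ.2 a ha).ne,
      fun r hr hrT => weakConvOn_of_moTendsto hμ hμn h hr (by simpa [hr] using hrT)⟩
  have hbc : (∃ T : Set ℝ, T.Countable ∧ ∀ r : ℝ, 0 < r → r ∉ T →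
      WeakConvOn {x | r ≤ infDist x C} μn μ) →
      ∃ r : ℕ → ℝ, StrictAnti r ∧ (∀ i, 0 < r i) ∧ Tendsto r atTop (𝓝 0) ∧
        ∀ i, WeakConvOn {x | r i ≤ infDist x C} μn μ := by
    rintro ⟨T, hT, hw⟩
    obtain ⟨r, hanti, hpos, hlim, hrT⟩ := hT.exists_seq_strictAnti_tendsto_zero_notMem
    exact ⟨r, hanti, hpos, hlim, fun i => hw _ (hpos i) (hrT i)⟩
  have hca : (∃ r : ℕ → ℝ, StrictAnti r ∧ (∀ i, 0 < r i) ∧ Tendsto r atTop (𝓝 0) ∧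
      ∀ i, WeakConvOn {x | r i ≤ infDist x C} μn μ) → MOTendsto C μn μ := by
    rintro ⟨r, -, hpos, hlim, hw⟩
    refine moTendsto_of_weakConvOn fun ρ hρ => ?_
    obtain ⟨i, hi⟩ := (hlim.eventually_lt_const hρ).exists
    exact ⟨r i, ⟨hpos i, hi⟩, hw i⟩
  exact ⟨⟨hab, hca ∘ hbc⟩, hbc, hab ∘ hca⟩

/-- Portmanteau (i) ⟺ (v) ⟺ (vi): `μ_n → μ` in `M_O` iff the restrictions to
`S \ C^r` converge weakly for all but countably many `r > 0`, iff they converge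
weakly along some sequence `r_i ↓ 0`. -/
theorem stmt3 [BorelSpace S] [CompleteSpace S] [TopologicalSpace.SeparableSpace S]
    (C : Set S) (hC : IsClosed C)
    (μ : Measure S) (μn : ℕ → Measure S)
    (hμ : MemMO C μ) (hμn : ∀ n, MemMO C (μn n)) :
    (MOTendsto C μn μ ↔
      ∃ T : Set ℝ, T.Countable ∧ ∀ r : ℝ, 0 < r → r ∉ T →
        WeakConvOn {x | r ≤ infDist x C} μn μ) ∧
    ((∃ T : Set ℝ, T.Countable ∧ ∀ r : ℝ, 0 < r → r ∉ T →
        WeakConvOn {x | r ≤ infDist x C} μn μ) ↔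
      ∃ r : ℕ → ℝ, StrictAnti r ∧ (∀ i, 0 < r i) ∧ Tendsto r atTop (𝓝 0) ∧
        ∀ i, WeakConvOn {x | r i ≤ infDist x C} μn μ) :=
  stmt3_general C μ μn hμ hμn
end
end

section
/- Let h : S → S' be continuous and suppose that S is compact or C is compact, and set C' = h(C) (which is then closed) and O' = S' \ C'. If μ_n → μ in M_O, then the pushforward measures of μ_n and μ under h, restricted to O', belong to M_{O'} and converge in M_{O'}; equivalently, ∫_O (f' ∘ h) dμ_n → ∫_O (f' ∘ h) dμ for every f' ∈ C_{O'} (with f' extended by 0 to S'). -/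
open MeasureTheory Metric Filter Topology Set

noncomputable section

variable {S : Type*} [MetricSpace S] [MeasurableSpace S]

omit [MeasurableSpace S] in
lemma key_lemma {S' : Type*} [MetricSpace S'] (C : Set S) (hC : IsClosed C)
    (h : S → S') (hcont : Continuous h)
    (hcompact : CompactSpace S ∨ IsCompact C) (r : ℝ) (hr : 0 < r) :
    ∃ s > 0, ∀ x, r ≤ infDist (h x) (h '' C) → s ≤ infDist x C := by
  rcases eq_empty_or_nonempty C with rfl | hne
  · exact ⟨1, one_pos, fun x hx => absurd hx (by simp [infDist_empty, not_le, hr])⟩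
  · have hCcpt : IsCompact C := hcompact.elim (fun _ => hC.isCompact) id
    set U : Set S := {x | infDist (h x) (h '' C) < r} with hU
    have hUopen : IsOpen U :=
      isOpen_lt ((continuous_infDist_pt _).comp hcont) continuous_const
    have hCU : C ⊆ U := fun c hc => by
      simpa [hU, infDist_zero_of_mem (mem_image_of_mem h hc)] using hr
    obtain ⟨δ, hδ, hthick⟩ := hCcpt.exists_thickening_subset_open hUopen hCU
    refine ⟨δ, hδ, fun x hx => ?_⟩
    by_contra hlt
    push_neg at hlt
    have : x ∈ thickening δ C := (mem_thickening_iff_infDist_lt hne).2 hlt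
    exact absurd hx (not_le.2 (hthick this))

lemma co_continuous {S' : Type*} [MetricSpace S'] (C' : Set S') (hC' : IsClosed C')
    (f' : S' → ℝ) (hf : IsCO C' f') : Continuous f' := by
  obtain ⟨hcOn, _, _, r, hr, hvan⟩ := hf
  rw [continuous_iff_continuousAt]
  intro y
  by_cases hy : infDist y C' < r
  · have hV : IsOpen {z : S' | infDist z C' < r} :=
      isOpen_lt (continuous_infDist_pt _) continuous_const
    have : f' =ᶠ[𝓝 y] fun _ => (0 : ℝ) :=
      eventually_of_mem (hV.mem_nhds hy) (fun z hz => hvan z hz)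
    exact this.continuousAt
  · have hyC : y ∈ C'ᶜ := fun hmem => hy (by simpa [infDist_zero_of_mem hmem] using hr)
    exact hcOn.continuousAt (hC'.isOpen_compl.mem_nhds hyC)

/-- Mapping corollary: if `h : S → S'` is continuous and `S` or `C` is compact, then
`C' = h(C)` is closed and `μ_n → μ` in `M_O` implies that the pushforwards, restricted
to `O' = S' \ C'`, lie in `M_{O'}` and converge in `M_{O'}`; equivalently
`∫ (f' ∘ h) dμ_n → ∫ (f' ∘ h) dμ` for every `f' ∈ C_{O'}`. -/
theorem stmt7 [BorelSpace S] {S' : Type*} [MetricSpace S'] [MeasurableSpace S'] [BorelSpace S']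
    [CompleteSpace S] [TopologicalSpace.SeparableSpace S]
    [CompleteSpace S'] [TopologicalSpace.SeparableSpace S']
    (C : Set S) (hC : IsClosed C)
    (μ : Measure S) (μn : ℕ → Measure S)
    (hμ : MemMO C μ) (hμn : ∀ n, MemMO C (μn n))
    (h : S → S') (hcont : Continuous h)
    (hcompact : CompactSpace S ∨ IsCompact C)
    (hconv : MOTendsto C μn μ) :
    IsClosed (h '' C) ∧
    MemMO (h '' C) ((Measure.map h μ).restrict (h '' C)ᶜ) ∧
    (∀ n, MemMO (h '' C) ((Measure.map h (μn n)).restrict (h '' C)ᶜ)) ∧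
    MOTendsto (h '' C) (fun n => (Measure.map h (μn n)).restrict (h '' C)ᶜ)
      ((Measure.map h μ).restrict (h '' C)ᶜ) ∧
    ∀ f' : S' → ℝ, IsCO (h '' C) f' →
      Tendsto (fun n => ∫ x, f' (h x) ∂ μn n) atTop (𝓝 (∫ x, f' (h x) ∂ μ)) := by
  have hCcpt : IsCompact C := hcompact.elim (fun _ => hC.isCompact) id
  have hC'closed : IsClosed (h '' C) := (hCcpt.image hcont).isClosed
  have hC'meas : MeasurableSet (h '' C) := hC'closed.measurableSet
  -- generic MemMO for pushforwards
  have hMem : ∀ m : Measure S, MemMO C m →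
      MemMO (h '' C) ((Measure.map h m).restrict (h '' C)ᶜ) := by
    intro m hm
    constructor
    · rw [Measure.restrict_apply hC'meas]
      simp
    · intro r hr
      obtain ⟨s, hs, hkey⟩ := key_lemma C hC h hcont hcompact r hr
      have hAr : MeasurableSet {y : S' | r ≤ infDist y (h '' C)} :=
        (isClosed_le continuous_const (continuous_infDist_pt _)).measurableSet
      calc ((Measure.map h m).restrict (h '' C)ᶜ) {y | r ≤ infDist y (h '' C)}
          ≤ (Measure.map h m) {y | r ≤ infDist y (h '' C)} :=
            by rw [Measure.restrict_apply hAr]; exact measure_mono inter_subset_left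
        _ = m (h ⁻¹' {y | r ≤ infDist y (h '' C)}) :=
            Measure.map_apply hcont.measurable hAr
        _ ≤ m {x | s ≤ infDist x C} := measure_mono (fun x hx => hkey x hx)
        _ < ⊤ := hm.2 s hs
  -- IsCO transfer
  have hCO : ∀ f' : S' → ℝ, IsCO (h '' C) f' → IsCO C (fun x => f' (h x)) := by
    intro f' hf'
    have hfc : Continuous f' := co_continuous _ hC'closed _ hf'
    obtain ⟨_, hnn, ⟨B, hB⟩, r, hr, hvan⟩ := hf'
    obtain ⟨s, hs, hkey⟩ := key_lemma C hC h hcont hcompact r hr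
    refine ⟨(hfc.comp hcont).continuousOn, fun x => hnn _, ⟨B, fun x => hB _⟩,
      s, hs, fun x hx => ?_⟩
    refine hvan _ ?_
    by_contra hge
    exact absurd hx (not_lt.2 (hkey x (not_lt.1 hge)))
  -- integral identity
  have hint : ∀ (m : Measure S) (f' : S' → ℝ), IsCO (h '' C) f' →
      ∫ y, f' y ∂ ((Measure.map h m).restrict (h '' C)ᶜ) = ∫ x, f' (h x) ∂ m := by
    intro m f' hf'
    have hfc : Continuous f' := co_continuous _ hC'closed _ hf'
    obtain ⟨_, _, _, r, hr, hvan⟩ := hf'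
    have hind : ((h '' C)ᶜ).indicator f' = f' := by
      funext y
      by_cases hy : y ∈ h '' C
      · rw [indicator_of_notMem (by simpa using hy),
          hvan y (by simpa [infDist_zero_of_mem hy] using hr)]
      · exact indicator_of_mem (show y ∈ (h '' C)ᶜ from hy) f'
    calc ∫ y, f' y ∂ ((Measure.map h m).restrict (h '' C)ᶜ)
        = ∫ y, ((h '' C)ᶜ).indicator f' y ∂ (Measure.map h m) :=
          (integral_indicator hC'meas.compl).symm
      _ = ∫ y, f' y ∂ (Measure.map h m) := by rw [hind]
      _ = ∫ x, f' (h x) ∂ m :=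
          integral_map hcont.aemeasurable hfc.aestronglyMeasurable
  have hlast : ∀ f' : S' → ℝ, IsCO (h '' C) f' →
      Tendsto (fun n => ∫ x, f' (h x) ∂ μn n) atTop (𝓝 (∫ x, f' (h x) ∂ μ)) :=
    fun f' hf' => hconv _ (hCO f' hf')
  refine ⟨hC'closed, hMem μ hμ, fun n => hMem _ (hμn n), ?_, hlast⟩
  intro f' hf'
  simp only [hint _ f' hf']
  exact hlast f' hf'
end
end

section
/- The map CUMSUM : ℝ_+^∞ → ℝ_+^∞ defined by CUMSUM(x) = (x_1, x_1 + x_2, x_1 + x_2 + x_3, ...) is Lipschitz with constant 2 in the metric d_∞; that is, d_∞(CUMSUM(x), CUMSUM(y)) ≤ 2 d_∞(x,y) for all x, y ∈ ℝ_+^∞. In particular CUMSUM is uniformly continuous. -/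
open Filter Topology

noncomputable section

/-- The metric `d_∞` on `ℝ₊^∞` (sequences indexed from `1` in the paper, from `0` here):
`d_∞(x,y) = Σ_{i≥1} 2^{-i} (|x_i − y_i| ∧ 1)`. -/
def dinf (x y : ℕ → ℝ) : ℝ := ∑' i : ℕ, (2 : ℝ)⁻¹ ^ (i + 1) * min |x i - y i| 1

/-- The metric `d'_∞` on `ℝ₊^∞`:
`d'_∞(x,y) = Σ_{p≥1} 2^{-p} ((Σ_{l=1}^p |x_l − y_l|) ∧ 1)`. -/
def dinf' (x y : ℕ → ℝ) : ℝ :=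
  ∑' p : ℕ, (2 : ℝ)⁻¹ ^ (p + 1) * min (∑ l ∈ Finset.range (p + 1), |x l - y l|) 1

/-- The partial-sum map `CUMSUM(x) = (x_1, x_1+x_2, x_1+x_2+x_3, …)`. -/
def CUMSUM (x : ℕ → ℝ) : ℕ → ℝ := fun n => ∑ i ∈ Finset.range (n + 1), x i


lemma term_nonneg (x y : ℕ → ℝ) (i : ℕ) :
    0 ≤ (2 : ℝ)⁻¹ ^ (i + 1) * min |x i - y i| 1 := by
  positivity

lemma summable_dinf (x y : ℕ → ℝ) :
    Summable (fun i : ℕ => (2 : ℝ)⁻¹ ^ (i + 1) * min |x i - y i| 1) := by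
  have hg : Summable (fun i : ℕ => (2:ℝ)⁻¹ * (2:ℝ)⁻¹ ^ i) :=
    (summable_geometric_of_lt_one (by norm_num) (by norm_num)).mul_left _
  refine Summable.of_nonneg_of_le (fun i => term_nonneg x y i) (fun i => ?_) hg
  have h1 : min |x i - y i| 1 ≤ 1 := min_le_right _ _
  have h2 : (0:ℝ) ≤ (2:ℝ)⁻¹ ^ (i+1) := by positivity
  calc (2 : ℝ)⁻¹ ^ (i + 1) * min |x i - y i| 1 ≤ (2:ℝ)⁻¹ ^ (i+1) * 1 := by
        exact mul_le_mul_of_nonneg_left h1 h2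
    _ = (2:ℝ)⁻¹ * (2:ℝ)⁻¹ ^ i := by ring

lemma min_sum_le (b : ℕ → ℝ) (hb : ∀ l, 0 ≤ b l) (s : Finset ℕ) :
    min (∑ l ∈ s, b l) 1 ≤ ∑ l ∈ s, min (b l) 1 := by
  by_cases h : ∃ l ∈ s, 1 ≤ b l
  · obtain ⟨l₀, hl₀, hb₀⟩ := h
    calc min (∑ l ∈ s, b l) 1 ≤ 1 := min_le_right _ _
      _ = min (b l₀) 1 := by rw [min_eq_right hb₀]
      _ ≤ ∑ l ∈ s, min (b l) 1 :=
        Finset.single_le_sum (fun l _ => le_min (hb l) zero_le_one) hl₀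
  · push_neg at h
    have : ∑ l ∈ s, min (b l) 1 = ∑ l ∈ s, b l :=
      Finset.sum_congr rfl fun l hl => min_eq_left (h l hl).le
    rw [this]
    exact min_le_left _ _

lemma geom_tail (i N : ℕ) :
    ∑ p ∈ Finset.Ico i N, (2 : ℝ)⁻¹ ^ (p + 1) ≤ 2 * (2 : ℝ)⁻¹ ^ (i + 1) := by
  have h := geom_sum_Ico_le_of_lt_one (by norm_num : (0:ℝ) ≤ 2⁻¹)
    (by norm_num : (2:ℝ)⁻¹ < 1) (m := i) (n := N)
  have hsum : ∑ p ∈ Finset.Ico i N, (2:ℝ)⁻¹ ^ (p + 1)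
      = (2:ℝ)⁻¹ * ∑ p ∈ Finset.Ico i N, (2:ℝ)⁻¹ ^ p := by
    rw [Finset.mul_sum]
    exact Finset.sum_congr rfl fun p _ => by ring
  rw [hsum]
  have : (2:ℝ)⁻¹ ^ i / (1 - 2⁻¹) = 2 * (2:ℝ)⁻¹ ^ i := by
    norm_num; ring
  have hp : (2:ℝ)⁻¹ ^ (i+1) = (2:ℝ)⁻¹ ^ i * 2⁻¹ := pow_succ _ _
  nlinarith [pow_nonneg (by norm_num : (0:ℝ) ≤ 2⁻¹) i]

lemma main (x y : ℕ → ℝ) :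
    ∑' i : ℕ, (2 : ℝ)⁻¹ ^ (i + 1) * min |CUMSUM x i - CUMSUM y i| 1
      ≤ 2 * ∑' i : ℕ, (2 : ℝ)⁻¹ ^ (i + 1) * min |x i - y i| 1 := by
  set a : ℕ → ℝ := fun i => min |x i - y i| 1 with ha
  have ha0 : ∀ i, 0 ≤ a i := fun i => le_min (abs_nonneg _) zero_le_one
  apply Real.tsum_le_of_sum_range_le (fun n => term_nonneg _ _ n)
  intro N
  have step1 : ∀ p, (2 : ℝ)⁻¹ ^ (p + 1) * min |CUMSUM x p - CUMSUM y p| 1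
      ≤ ∑ i ∈ Finset.range (p + 1), (2 : ℝ)⁻¹ ^ (p + 1) * a i := by
    intro p
    rw [← Finset.mul_sum]
    apply mul_le_mul_of_nonneg_left _ (by positivity)
    calc min |CUMSUM x p - CUMSUM y p| 1
        ≤ min (∑ l ∈ Finset.range (p+1), |x l - y l|) 1 := by
          apply min_le_min _ le_rfl
          rw [CUMSUM, CUMSUM, ← Finset.sum_sub_distrib]
          exact Finset.abs_sum_le_sum_abs _ _
      _ ≤ ∑ l ∈ Finset.range (p+1), min |x l - y l| 1 := min_sum_le _ (fun l => abs_nonneg _) _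
  have hext : ∀ p ∈ Finset.range N,
      ∑ i ∈ Finset.range (p + 1), (2 : ℝ)⁻¹ ^ (p + 1) * a i
        = ∑ i ∈ Finset.range N, (if i ≤ p then (2 : ℝ)⁻¹ ^ (p + 1) * a i else 0) := by
    intro p hp
    rw [Finset.mem_range] at hp
    rw [Finset.sum_ite, Finset.sum_const_zero, add_zero]
    congr 1
    ext i
    simp only [Finset.mem_filter, Finset.mem_range]
    omega
  calc ∑ p ∈ Finset.range N, (2 : ℝ)⁻¹ ^ (p + 1) * min |CUMSUM x p - CUMSUM y p| 1
      ≤ ∑ p ∈ Finset.range N, ∑ i ∈ Finset.range (p + 1), (2 : ℝ)⁻¹ ^ (p + 1) * a i :=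
        Finset.sum_le_sum fun p _ => step1 p
    _ = ∑ p ∈ Finset.range N, ∑ i ∈ Finset.range N,
          (if i ≤ p then (2 : ℝ)⁻¹ ^ (p + 1) * a i else 0) := Finset.sum_congr rfl hext
    _ = ∑ i ∈ Finset.range N, ∑ p ∈ Finset.range N,
          (if i ≤ p then (2 : ℝ)⁻¹ ^ (p + 1) * a i else 0) := Finset.sum_comm
    _ ≤ ∑ i ∈ Finset.range N, 2 * ((2 : ℝ)⁻¹ ^ (i + 1) * a i) := by
        apply Finset.sum_le_sum
        intro i _
        have heq : ∑ p ∈ Finset.range N, (if i ≤ p then (2 : ℝ)⁻¹ ^ (p + 1) * a i else 0)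
            = (∑ p ∈ Finset.Ico i N, (2 : ℝ)⁻¹ ^ (p + 1)) * a i := by
          rw [Finset.sum_ite, Finset.sum_const_zero, add_zero, ← Finset.sum_mul]
          congr 1
          apply Finset.sum_congr _ (fun _ _ => rfl)
          ext p
          simp only [Finset.mem_filter, Finset.mem_range, Finset.mem_Ico]
          omega
        rw [heq]
        have := geom_tail i N
        nlinarith [ha0 i]
    _ = 2 * ∑ i ∈ Finset.range N, (2 : ℝ)⁻¹ ^ (i + 1) * a i := by rw [Finset.mul_sum]
    _ ≤ 2 * ∑' i : ℕ, (2 : ℝ)⁻¹ ^ (i + 1) * a i := by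
        apply mul_le_mul_of_nonneg_left _ (by norm_num)
        exact Summable.sum_le_tsum _ (fun i _ => term_nonneg x y i) (summable_dinf x y)

/-- `CUMSUM` is Lipschitz with constant `2` for the metric `d_∞` on `ℝ₊^∞`, and in
particular uniformly continuous. -/
theorem stmt13 :
    (∀ x y : ℕ → ℝ, (∀ i, 0 ≤ x i) → (∀ i, 0 ≤ y i) →
        dinf (CUMSUM x) (CUMSUM y) ≤ 2 * dinf x y) ∧
    (∀ ε : ℝ, 0 < ε → ∃ δ : ℝ, 0 < δ ∧ ∀ x y : ℕ → ℝ,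
        (∀ i, 0 ≤ x i) → (∀ i, 0 ≤ y i) → dinf x y < δ →
          dinf (CUMSUM x) (CUMSUM y) < ε) := by
  have key : ∀ x y : ℕ → ℝ, dinf (CUMSUM x) (CUMSUM y) ≤ 2 * dinf x y := fun x y => main x y
  refine ⟨fun x y _ _ => key x y, fun ε hε => ⟨ε / 2, by linarith, fun x y _ _ hxy => ?_⟩⟩
  calc dinf (CUMSUM x) (CUMSUM y) ≤ 2 * dinf x y := key x y
    _ < 2 * (ε / 2) := by linarith
    _ = ε := by ring
end
end
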